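/- Let V ∈ L²(ℝ^d), (ρ_n) a sequence of positive reals with ρ_n → 0, (x_n) ⊂ ℝ^d, and (u_n) ⊂ L²(ℝ^d) such that the rescaled functions v_n(x) = ρ_n^{d/2} u_n(ρ_n x + x_n) converge weakly to V in L²(ℝ^d). Then for every A > 0, liminf_{n→∞} sup_{y∈ℝ^d} ∫_{|x−y|≤1} |u_n(x)|² dx ≥ ∫_{|x|≤A} |V(x)|² dx, and hence liminf_{n→∞} sup_{y∈ℝ^d} ∫_{|x−y|≤1} |u_n|² ≥ ‖V‖_{L²}². -/

import Mathlib

open MeasureTheory Filter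

open scoped ENNReal

/-!
Testing the weak convergence `v_n ⇀ V` against `φ = 1_{B(0,A)} V` and applying Cauchy–Schwarz
gives `(∫_{B(0,A)} |V|²)² = lim |⟨v_n, φ⟩|² ≤ liminf (∫_{B(0,A)} |v_n|²) · ∫_{B(0,A)} |V|²`, so the
mass of `V` on the ball is at most `liminf ∫_{B(0,A)} |v_n|²`. The change of variables
`x ↦ ρ_n x + x_n` turns the latter into the mass of `u_n` on `B(x_n, ρ_n A)`, a subset of a unit
ball once `ρ_n A ≤ 1`. Letting `A → ∞` gives the bound for `‖V‖²`.
-/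

section Rescaling

variable {E : Type*} [NormedAddCommGroup E] [NormedSpace ℝ E]

theorem preimage_smul_add_closedBall {r : ℝ} (hr : 0 < r) (c : E) (A : ℝ) :
    (fun x => r • x + c) ⁻¹' Metric.closedBall c (r * A) = Metric.closedBall 0 A := by
  ext x
  simp [dist_eq_norm, norm_smul, abs_of_pos hr, mul_le_mul_iff_right₀ hr]

variable [MeasurableSpace E] [BorelSpace E]

theorem measurableEmbedding_smul_add {r : ℝ} (hr : r ≠ 0) (c : E) :
    MeasurableEmbedding fun x : E => r • x + c :=
  ((Homeomorph.smulOfNeZero r hr).trans (Homeomorph.addRight c)).measurableEmbedding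

variable [FiniteDimensional ℝ E] (μ : Measure E) [μ.IsAddHaarMeasure]

theorem map_smul_add_addHaar {r : ℝ} (hr : r ≠ 0) (c : E) :
    Measure.map (fun x => r • x + c) μ
      = ENNReal.ofReal |(r ^ Module.finrank ℝ E)⁻¹| • μ := by
  change Measure.map ((· + c) ∘ (r • ·)) μ = _
  rw [← Measure.map_map (measurable_add_const c) (measurable_const_smul r),
    Measure.map_addHaar_smul μ hr, Measure.map_smul, map_add_right_eq_self]

theorem quasiMeasurePreserving_smul_add {r : ℝ} (hr : r ≠ 0) (c : E) :
    Measure.QuasiMeasurePreserving (fun x : E => r • x + c) μ μ :=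
  ⟨(measurableEmbedding_smul_add hr c).measurable,
    (map_smul_add_addHaar μ hr c).symm ▸ Measure.smul_absolutelyContinuous⟩

theorem setLIntegral_comp_smul_add (f : E → ℝ≥0∞) {r : ℝ} (hr : r ≠ 0) (c : E) (s : Set E) :
    ∫⁻ x in (fun x => r • x + c) ⁻¹' s, f (r • x + c) ∂μ
      = ENNReal.ofReal |(r ^ Module.finrank ℝ E)⁻¹| * ∫⁻ y in s, f y ∂μ := by
  have he := measurableEmbedding_smul_add (E := E) hr c
  calc ∫⁻ x in (fun x => r • x + c) ⁻¹' s, f (r • x + c) ∂μ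
      = ∫⁻ y in s, f y ∂(Measure.map (fun x => r • x + c) μ) := by
        rw [he.restrict_map, he.lintegral_map]
    _ = _ := by
        rw [map_smul_add_addHaar μ hr c, Measure.restrict_smul, lintegral_smul_measure,
          smul_eq_mul]

theorem setLIntegral_closedBall_rescale {𝕜 : Type*} [RCLike 𝕜] (u : E → 𝕜) {r : ℝ}
    (hr : 0 < r) (c : E) (A : ℝ) :
    ∫⁻ x in Metric.closedBall 0 A,
        ‖((r ^ ((Module.finrank ℝ E : ℝ) / 2) : ℝ) : 𝕜) * u (r • x + c)‖ₑ ^ 2 ∂μ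
      = ∫⁻ y in Metric.closedBall c (r * A), ‖u y‖ₑ ^ 2 ∂μ := by
  have hscale : ‖((r ^ ((Module.finrank ℝ E : ℝ) / 2) : ℝ) : 𝕜)‖ₑ ^ 2
      = ENNReal.ofReal (r ^ Module.finrank ℝ E) := by
    rw [← ofReal_norm, RCLike.norm_ofReal, abs_of_nonneg (by positivity),
      ← ENNReal.ofReal_pow (by positivity), ← Real.rpow_natCast _ 2, ← Real.rpow_mul hr.le,
      ← Real.rpow_natCast r]
    norm_num
  simp_rw [enorm_mul, mul_pow, hscale]
  rw [lintegral_const_mul' _ _ ENNReal.ofReal_ne_top, ← preimage_smul_add_closedBall hr c A,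
    setLIntegral_comp_smul_add μ (fun y => ‖u y‖ₑ ^ 2) hr.ne' c, ← mul_assoc,
    abs_of_pos (by positivity), ← ENNReal.ofReal_mul (by positivity),
    mul_inv_cancel₀ (by positivity), ENNReal.ofReal_one, one_mul]

end Rescaling

theorem ENNReal.lintegral_mul_sq_le {α : Type*} [MeasurableSpace α] {μ : Measure α}
    {f g : α → ℝ≥0∞} (hf : AEMeasurable f μ) (hg : AEMeasurable g μ) :
    (∫⁻ x, f x * g x ∂μ) ^ 2 ≤ (∫⁻ x, f x ^ 2 ∂μ) * ∫⁻ x, g x ^ 2 ∂μ := by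
  have h := ENNReal.lintegral_mul_le_Lp_mul_Lq μ Real.HolderConjugate.two_two hf hg
  simp only [Pi.mul_apply, ENNReal.rpow_two] at h
  calc (∫⁻ x, f x * g x ∂μ) ^ 2
      ≤ ((∫⁻ x, f x ^ 2 ∂μ) ^ (1 / 2 : ℝ) * (∫⁻ x, g x ^ 2 ∂μ) ^ (1 / 2 : ℝ)) ^ 2 := by
        gcongr
    _ = (∫⁻ x, f x ^ 2 ∂μ) * ∫⁻ x, g x ^ 2 ∂μ := by
        rw [mul_pow, ← ENNReal.rpow_two, ← ENNReal.rpow_mul, ← ENNReal.rpow_two,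
          ← ENNReal.rpow_mul]
        norm_num

theorem ENNReal.le_liminf_of_tendsto_sq {ι : Type*} {l : Filter ι} [l.NeBot]
    {a I : ι → ℝ≥0∞} {J : ℝ≥0∞} (hJ : J ≠ ⊤) (ha : Tendsto a l (nhds (J ^ 2)))
    (haI : ∀ i, a i ≤ I i * J) : J ≤ liminf I l := by
  rcases eq_or_ne J 0 with rfl | hJ0
  · exact zero_le
  have h : J * J ≤ J * liminf I l :=
    calc J * J = liminf a l := by rw [← sq, ha.liminf_eq]
      _ ≤ liminf (fun i => I i * J) l := liminf_le_liminf (Eventually.of_forall haI)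
      _ = J * liminf I l := ENNReal.liminf_mul_const_of_ne_top hJ
  exact (ENNReal.mul_le_mul_iff_right hJ0 hJ).mp h

section WeakLowerSemicontinuity

variable {α 𝕜 : Type*} [MeasurableSpace α] {μ : Measure α} [RCLike 𝕜] {V : α → 𝕜} {B : Set α}

open ComplexConjugate

theorem integral_mul_conj_indicator_self (hV : AEStronglyMeasurable V μ) (hB : MeasurableSet B) :
    ∫ x, V x * conj (B.indicator V x) ∂μ = ((∫⁻ x in B, ‖V x‖ₑ ^ 2 ∂μ).toReal : 𝕜) := by
  have hpt : (fun x => V x * conj (B.indicator V x))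
      = B.indicator fun x => ((‖V x‖ ^ 2 : ℝ) : 𝕜) := by
    ext x
    by_cases hx : x ∈ B <;> simp [hx, RCLike.mul_conj]
  rw [hpt, integral_indicator hB, integral_ofReal,
    integral_eq_lintegral_of_nonneg_ae (Eventually.of_forall fun _ => by positivity)
      (by fun_prop : AEStronglyMeasurable (fun x => ‖V x‖ ^ 2) (μ.restrict B))]
  simp_rw [ENNReal.ofReal_pow (norm_nonneg _), ofReal_norm]

theorem enorm_integral_mul_conj_indicator_sq_le {f : α → 𝕜} (hf : AEStronglyMeasurable f μ)
    (hV : AEStronglyMeasurable V μ) (hB : MeasurableSet B) :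
    ‖∫ x, f x * conj (B.indicator V x) ∂μ‖ₑ ^ 2
      ≤ (∫⁻ x in B, ‖f x‖ₑ ^ 2 ∂μ) * ∫⁻ x in B, ‖V x‖ₑ ^ 2 ∂μ := by
  have hpt : (fun x => ‖f x * conj (B.indicator V x)‖ₑ)
      = B.indicator fun x => ‖f x‖ₑ * ‖V x‖ₑ := by
    ext x
    by_cases hx : x ∈ B <;> simp [hx]
  calc ‖∫ x, f x * conj (B.indicator V x) ∂μ‖ₑ ^ 2
      ≤ (∫⁻ x in B, ‖f x‖ₑ * ‖V x‖ₑ ∂μ) ^ 2 := by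
        rw [← lintegral_indicator hB, ← hpt]
        gcongr
        exact enorm_integral_le_lintegral_enorm _
    _ ≤ _ := ENNReal.lintegral_mul_sq_le hf.restrict.enorm hV.restrict.enorm

theorem setLIntegral_enorm_sq_le_liminf {f : ℕ → α → 𝕜}
    (hf : ∀ n, AEStronglyMeasurable (f n) μ) (hV : MemLp V 2 μ) (hB : MeasurableSet B)
    (hweak : Tendsto (fun n => ∫ x, f n x * conj (B.indicator V x) ∂μ) atTop
      (nhds (∫ x, V x * conj (B.indicator V x) ∂μ))) :
    ∫⁻ x in B, ‖V x‖ₑ ^ 2 ∂μ ≤ liminf (fun n => ∫⁻ x in B, ‖f n x‖ₑ ^ 2 ∂μ) atTop := by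
  have hfin : ∫⁻ x in B, ‖V x‖ₑ ^ 2 ∂μ ≠ ⊤ := by
    simpa using (lintegral_rpow_enorm_lt_top_of_eLpNorm_lt_top two_ne_zero ENNReal.ofNat_ne_top
      (hV.restrict B).eLpNorm_lt_top).ne
  refine ENNReal.le_liminf_of_tendsto_sq hfin ?_
    fun n => enorm_integral_mul_conj_indicator_sq_le (hf n) hV.1 hB
  rw [integral_mul_conj_indicator_self hV.1 hB] at hweak
  have hlim := (ENNReal.continuous_pow 2).tendsto _ |>.comp hweak.enorm
  rwa [← ofReal_norm, RCLike.norm_ofReal, abs_of_nonneg ENNReal.toReal_nonneg,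
    ENNReal.ofReal_toReal hfin] at hlim

end WeakLowerSemicontinuity

section Balls

variable {α : Type*} [PseudoMetricSpace α] [MeasurableSpace α] {μ : Measure α}

theorem setLIntegral_closedBall_le_iSup (f : α → ℝ≥0∞) (c : α) {r : ℝ} (hr : r ≤ 1) :
    ∫⁻ x in Metric.closedBall c r, f x ∂μ ≤ ⨆ y, ∫⁻ x in Metric.closedBall y 1, f x ∂μ :=
  (lintegral_mono_set (Metric.closedBall_subset_closedBall hr)).trans
    (le_iSup (fun y => ∫⁻ x in Metric.closedBall y 1, f x ∂μ) c)

theorem lintegral_le_of_forall_setLIntegral_closedBall_le {f : α → ℝ≥0∞} {L : ℝ≥0∞} (x₀ : α)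
    (h : ∀ A : ℝ, 0 < A → ∫⁻ x in Metric.closedBall x₀ A, f x ∂μ ≤ L) :
    ∫⁻ x, f x ∂μ ≤ L := by
  have hmono : Monotone fun n : ℕ => Metric.closedBall x₀ (n : ℝ) :=
    fun m n hmn => Metric.closedBall_subset_closedBall (Nat.cast_le.mpr hmn)
  rw [← setLIntegral_univ, ← Metric.iUnion_closedBall_nat x₀,
    setLIntegral_iUnion_of_directed _ hmono.directed_le]
  exact iSup_le fun n => (lintegral_mono_set (hmono n.le_succ)).trans
    (h _ (by positivity))

end Balls

open ComplexConjugate in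
theorem setLIntegral_closedBall_le_liminf_iSup {E 𝕜 : Type*} [NormedAddCommGroup E]
    [NormedSpace ℝ E] [MeasurableSpace E] [BorelSpace E] [FiniteDimensional ℝ E]
    (μ : Measure E) [μ.IsAddHaarMeasure] [RCLike 𝕜]
    {u : ℕ → E → 𝕜} {V : E → 𝕜} {ρ : ℕ → ℝ} (xc : ℕ → E) {A : ℝ}
    (hρpos : ∀ n, 0 < ρ n) (hρ : Tendsto ρ atTop (nhds 0))
    (hV : MemLp V 2 μ) (hu : ∀ n, AEStronglyMeasurable (u n) μ)
    (hweak : Tendsto (fun n => ∫ x, ((ρ n ^ ((Module.finrank ℝ E : ℝ) / 2) : ℝ) : 𝕜) *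
        u n (ρ n • x + xc n) * conj ((Metric.closedBall 0 A).indicator V x) ∂μ) atTop
      (nhds (∫ x, V x * conj ((Metric.closedBall 0 A).indicator V x) ∂μ))) :
    ∫⁻ x in Metric.closedBall 0 A, ‖V x‖ₑ ^ 2 ∂μ
      ≤ liminf (fun n => ⨆ y, ∫⁻ x in Metric.closedBall y 1, ‖u n x‖ₑ ^ 2 ∂μ) atTop := by
  have hmeas : ∀ n, AEStronglyMeasurable
      (fun x => ((ρ n ^ ((Module.finrank ℝ E : ℝ) / 2) : ℝ) : 𝕜) * u n (ρ n • x + xc n)) μ :=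
    fun n => aestronglyMeasurable_const.mul
      ((hu n).comp_quasiMeasurePreserving (quasiMeasurePreserving_smul_add μ (hρpos n).ne' _))
  refine (setLIntegral_enorm_sq_le_liminf hmeas hV measurableSet_closedBall hweak).trans
    (liminf_le_liminf ?_)
  have hsmall : ∀ᶠ n in atTop, ρ n * A ≤ 1 :=
    (hρ.mul_const A).eventually (ge_mem_nhds (by rw [zero_mul]; exact one_pos))
  filter_upwards [hsmall] with n hn
  rw [setLIntegral_closedBall_rescale μ (u n) (hρpos n)]
  exact setLIntegral_closedBall_le_iSup _ _ hn

/-- if `v_n(x) = ρ_n^{d/2} u_n(ρ_n x + x_n)` converges weakly to `V` in `L²(ℝ^d)`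
with `ρ_n → 0`, then for every `A > 0`,
`liminf_n sup_y ∫_{|x-y|≤1} |u_n|² ≥ ∫_{|x|≤A} |V|²`, and hence
`liminf_n sup_y ∫_{|x-y|≤1} |u_n|² ≥ ‖V‖_{L²}²`. -/
theorem concentration_lower_bound (d : ℕ)
    (u : ℕ → EuclideanSpace ℝ (Fin d) → ℂ) (V : EuclideanSpace ℝ (Fin d) → ℂ)
    (ρ : ℕ → ℝ) (xc : ℕ → EuclideanSpace ℝ (Fin d))
    (hρpos : ∀ n, 0 < ρ n) (hρ : Tendsto ρ atTop (nhds 0))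
    (hV : MemLp V 2 volume) (hu : ∀ n, MemLp (u n) 2 volume)
    (hweak : ∀ φ : EuclideanSpace ℝ (Fin d) → ℂ, MemLp φ 2 volume →
      Tendsto (fun n => ∫ x, ((ρ n ^ ((d:ℝ) / 2) : ℝ) : ℂ) * u n (ρ n • x + xc n) *
          (starRingEnd ℂ) (φ x)) atTop
        (nhds (∫ x, V x * (starRingEnd ℂ) (φ x)))) :
    (∀ A : ℝ, 0 < A →
      (∫⁻ x in Metric.closedBall (0 : EuclideanSpace ℝ (Fin d)) A, (‖V x‖₊ : ℝ≥0∞) ^ 2) ≤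
        Filter.liminf (fun n => ⨆ y : EuclideanSpace ℝ (Fin d),
          ∫⁻ x in Metric.closedBall y 1, (‖u n x‖₊ : ℝ≥0∞) ^ 2) Filter.atTop) ∧
    (∫⁻ x, (‖V x‖₊ : ℝ≥0∞) ^ 2) ≤
      Filter.liminf (fun n => ⨆ y : EuclideanSpace ℝ (Fin d),
        ∫⁻ x in Metric.closedBall y 1, (‖u n x‖₊ : ℝ≥0∞) ^ 2) Filter.atTop := by
  have hball : ∀ A : ℝ, 0 < A →
      ∫⁻ x in Metric.closedBall 0 A, ‖V x‖ₑ ^ 2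
        ≤ liminf (fun n => ⨆ y, ∫⁻ x in Metric.closedBall y 1, ‖u n x‖ₑ ^ 2) atTop :=
    fun A _ => setLIntegral_closedBall_le_liminf_iSup volume xc hρpos hρ hV (fun n => (hu n).1)
      (by rw [finrank_euclideanSpace_fin]; exact hweak _ (hV.indicator measurableSet_closedBall))
  exact ⟨hball, lintegral_le_of_forall_setLIntegral_closedBall_le 0 hball⟩
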